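/- arXiv:1907.05004 — 2 statements merged into one kernel-verified Lean document; each statement's English description precedes it below -/
import Mathlib

section
/- Let (E, φ, φ_E, ⟨⟨·,·⟩⟩, ⊙_E, ρ_E) be a Hom-Courant algebroid over M and [[·,·]]_E the associated Hom-Courant bracket. Then for all e₁, e₂, e₃ ∈ Γ(E), the cyclic sum Σ_{Cycl(e₁,e₂,e₃)} [[ [[e₁,e₂]]_E, φ_E(e₃) ]]_E equals 𝒟T(e₁,e₂,e₃), where T(e₁,e₂,e₃) := (1/3) Σ_{Cycl(e₁,e₂,e₃)} ⟨⟨[[e₁,e₂]]_E, φ_E(e₃)⟩⟩. -/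
set_option maxHeartbeats 1000000

namespace HomPaper

variable {R : Type} [CommRing R]

/-- A `(σ,σ)`-derivation of the commutative ring `R` (modelling `C^∞(M)`), i.e. an additive
map `X : R → R` with `X (a b) = X a * σ b + σ a * X b`.  These model sections of the
pull-back bundle `φ^!TM`. -/
structure SDeriv (R : Type) [CommRing R] (σ : R ≃+* R) where
  toFun : R → R
  map_add' : ∀ a b, toFun (a + b) = toFun a + toFun b
  leibniz' : ∀ a b, toFun (a * b) = toFun a * σ b + σ a * toFun b

namespace SDeriv

variable {σ : R ≃+* R}

instance : FunLike (SDeriv R σ) R R where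
  coe := SDeriv.toFun
  coe_injective := by rintro ⟨f, _, _⟩ ⟨g, _, _⟩ h; simpa using h

@[ext] theorem ext {X Y : SDeriv R σ} (h : ∀ a, X a = Y a) : X = Y := DFunLike.ext _ _ h

@[simp] theorem mk_apply (f : R → R) (h1 h2) (a : R) : (⟨f, h1, h2⟩ : SDeriv R σ) a = f a := rfl

@[simp] theorem map_add (X : SDeriv R σ) (a b : R) : X (a + b) = X a + X b := X.map_add' a b

theorem leibniz (X : SDeriv R σ) (a b : R) : X (a * b) = X a * σ b + σ a * X b := X.leibniz' a b

@[simp] theorem map_zero (X : SDeriv R σ) : X 0 = 0 := by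
  have h := X.map_add 0 0
  simpa using h.symm

@[simp] theorem map_neg (X : SDeriv R σ) (a : R) : X (-a) = -(X a) := by
  have h := X.map_add a (-a)
  simp at h
  exact eq_neg_of_add_eq_zero_right h.symm

@[simp] theorem map_sub (X : SDeriv R σ) (a b : R) : X (a - b) = X a - X b := by
  rw [sub_eq_add_neg, map_add, map_neg, sub_eq_add_neg]

instance : Zero (SDeriv R σ) := ⟨⟨fun _ => 0, by simp, by simp⟩⟩
instance : Add (SDeriv R σ) :=
  ⟨fun X Y => ⟨fun a => X a + Y a, by intro a b; simp; ring, by intro a b; simp [leibniz]; ring⟩⟩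
instance : Neg (SDeriv R σ) :=
  ⟨fun X => ⟨fun a => -(X a), by intro a b; simp; ring, by intro a b; simp [leibniz]; ring⟩⟩
instance : SMul R (SDeriv R σ) :=
  ⟨fun r X => ⟨fun a => r * X a, by intro a b; simp; ring, by intro a b; simp [leibniz]; ring⟩⟩

@[simp] theorem zero_apply (a : R) : (0 : SDeriv R σ) a = 0 := rfl
@[simp] theorem add_apply (X Y : SDeriv R σ) (a : R) : (X + Y) a = X a + Y a := rfl
@[simp] theorem neg_apply (X : SDeriv R σ) (a : R) : (-X) a = -(X a) := rfl
@[simp] theorem smul_apply (r : R) (X : SDeriv R σ) (a : R) : (r • X) a = r * X a := rfl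

instance : AddCommGroup (SDeriv R σ) where
  add_assoc X Y Z := by ext a; simp; ring
  zero_add X := by ext a; simp
  add_zero X := by ext a; simp
  add_comm X Y := by ext a; simp; ring
  neg_add_cancel X := by ext a; simp
  nsmul := nsmulRec
  zsmul := zsmulRec

instance : Module R (SDeriv R σ) where
  one_smul X := by ext a; simp
  mul_smul r s X := by ext a; simp; ring
  smul_zero r := by ext a; simp
  smul_add r X Y := by ext a; simp; ring
  add_smul r s X := by ext a; simp; ring
  zero_smul X := by ext a; simp

/-- The operator `Ad_{φ^*} X := φ^* ∘ X ∘ (φ^*)^{-1}`. -/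
def Ad (σ : R ≃+* R) (X : SDeriv R σ) : SDeriv R σ :=
  ⟨fun a => σ (X (σ.symm a)), by intro a b; simp, by
    intro a b
    simp [map_mul, leibniz, RingEquiv.apply_symm_apply]⟩

@[simp] theorem Ad_apply (σ : R ≃+* R) (X : SDeriv R σ) (a : R) :
    Ad σ X a = σ (X (σ.symm a)) := rfl

/-- `Ad_{φ^*}` as an additive equivalence. -/
def AdEquiv (σ : R ≃+* R) : SDeriv R σ ≃+ SDeriv R σ where
  toFun := Ad σ
  invFun X := ⟨fun a => σ.symm (X (σ a)), by intro a b; simp, by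
    intro a b
    simp [map_mul, leibniz, RingEquiv.symm_apply_apply]⟩
  left_inv X := by ext a; simp
  right_inv X := by ext a; simp
  map_add' X Y := by ext a; simp

@[simp] theorem AdEquiv_apply (σ : R ≃+* R) (X : SDeriv R σ) (a : R) :
    AdEquiv σ X a = σ (X (σ.symm a)) := rfl

@[simp] theorem AdEquiv_symm_apply (σ : R ≃+* R) (X : SDeriv R σ) (a : R) :
    (AdEquiv σ).symm X a = σ.symm (X (σ a)) := rfl

/-- The bracket `[X,Y]_{φ^*} = φ^*∘X∘(φ^*)⁻¹∘Y∘(φ^*)⁻¹ − φ^*∘Y∘(φ^*)⁻¹∘X∘(φ^*)⁻¹`. -/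
def sbrack (σ : R ≃+* R) (X Y : SDeriv R σ) : SDeriv R σ :=
  ⟨fun a => σ (X (σ.symm (Y (σ.symm a)))) - σ (Y (σ.symm (X (σ.symm a)))), by
    intro a b; simp; ring, by
    intro a b
    simp [map_mul, map_add, leibniz, RingEquiv.apply_symm_apply, RingEquiv.symm_apply_apply]
    ring⟩

@[simp] theorem sbrack_apply (σ : R ≃+* R) (X Y : SDeriv R σ) (a : R) :
    sbrack σ X Y a = σ (X (σ.symm (Y (σ.symm a)))) - σ (Y (σ.symm (X (σ.symm a)))) := rfl

end SDeriv

/-- For an (ordinary) derivation `X` of `R = C^∞(M)` (i.e. a vector field on `M`), its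
pull-back section `X^! ∈ Γ(φ^!TM)`, realised as the `(σ,σ)`-derivation `σ ∘ X`. -/
def shriekDeriv (σ : R ≃+* R) (X : SDeriv R (RingEquiv.refl R)) : SDeriv R σ :=
  ⟨fun a => σ (X a), by intro a b; simp, by
    intro a b
    show σ (X (a * b)) = σ (X a) * σ b + σ a * σ (X b)
    rw [X.leibniz]
    simp⟩

@[simp] theorem shriekDeriv_apply (σ : R ≃+* R) (X : SDeriv R (RingEquiv.refl R)) (a : R) :
    shriekDeriv σ X a = σ (X a) := rfl

/-- The push-forward `φ_* X` of a vector field (derivation) `X`, realised as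
`(φ^*)⁻¹ ∘ X ∘ φ^*`. -/
def pushDeriv (σ : R ≃+* R) (X : SDeriv R (RingEquiv.refl R)) : SDeriv R (RingEquiv.refl R) :=
  ⟨fun a => σ.symm (X (σ a)), by intro a b; simp, by
    intro a b
    show σ.symm (X (σ (a * b))) = σ.symm (X (σ a)) * (RingEquiv.refl R) b +
      (RingEquiv.refl R) a * σ.symm (X (σ b))
    rw [map_mul, X.leibniz]
    simp⟩

@[simp] theorem pushDeriv_apply (σ : R ≃+* R) (X : SDeriv R (RingEquiv.refl R)) (a : R) :
    pushDeriv σ X a = σ.symm (X (σ a)) := rfl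

/-- The raw data of a Hom-Lie algebroid over (the ring of functions of) `M`:
an invertible Hom-bundle map `φ_A`, a bracket, and an anchor with values in the
`(σ,σ)`-derivations of `R` (sections of `φ^!TM`). -/
structure PreAlgebroid (σ : R ≃+* R) (A : Type) [AddCommGroup A] [Module R A] where
  φA : A ≃+ A
  φA_smul : ∀ (f : R) (X : A), φA (f • X) = σ f • φA X
  bracket : A → A → A
  anchor : A →ₗ[R] SDeriv R σ

/-- The axioms making the data of a `PreAlgebroid` into a Hom-Lie algebroid
(Definition 2.5 of the paper): `(Γ(A), φ_A, [·,·]_A)` is a Hom-Lie algebra, the Leibniz rule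
holds, and the anchor is compatible with `φ_A` and the brackets. -/
def PreAlgebroid.IsHomLie {σ : R ≃+* R} {A : Type} [AddCommGroup A] [Module R A]
    (P : PreAlgebroid σ A) : Prop :=
  (∀ X Y Z : A, P.bracket (X + Y) Z = P.bracket X Z + P.bracket Y Z) ∧
  (∀ X Y Z : A, P.bracket X (Y + Z) = P.bracket X Y + P.bracket X Z) ∧
  (∀ X Y : A, P.bracket X Y = - P.bracket Y X) ∧
  (∀ X Y : A, P.φA (P.bracket X Y) = P.bracket (P.φA X) (P.φA Y)) ∧
  (∀ X Y Z : A, P.bracket (P.φA X) (P.bracket Y Z) + P.bracket (P.φA Y) (P.bracket Z X) +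
      P.bracket (P.φA Z) (P.bracket X Y) = 0) ∧
  (∀ (X : A) (f : R) (Y : A),
      P.bracket X (f • Y) = σ f • P.bracket X Y + P.anchor (P.φA X) f • P.φA Y) ∧
  (∀ X : A, P.anchor (P.φA X) = SDeriv.Ad σ (P.anchor X)) ∧
  (∀ X Y : A, P.anchor (P.bracket X Y) = SDeriv.sbrack σ (P.anchor X) (P.anchor Y))

/-- Given raw structure maps on a module `A`, the property of being a Hom-Lie algebroid. -/
def IsHomLieAlgebroidRaw (σ : R ≃+* R) {A : Type} [AddCommGroup A] [Module R A]
    (φA : A → A) (bracket : A → A → A) (anchor : A → SDeriv R σ) : Prop :=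
  Function.Bijective φA ∧
  (∀ X Y, φA (X + Y) = φA X + φA Y) ∧
  (∀ (f : R) (X : A), φA (f • X) = σ f • φA X) ∧
  (∀ X Y, anchor (X + Y) = anchor X + anchor Y) ∧
  (∀ (f : R) (X : A), anchor (f • X) = f • anchor X) ∧
  (∀ X Y Z, bracket (X + Y) Z = bracket X Z + bracket Y Z) ∧
  (∀ X Y Z, bracket X (Y + Z) = bracket X Y + bracket X Z) ∧
  (∀ X Y, bracket X Y = - bracket Y X) ∧
  (∀ X Y, φA (bracket X Y) = bracket (φA X) (φA Y)) ∧
  (∀ X Y Z, bracket (φA X) (bracket Y Z) + bracket (φA Y) (bracket Z X) +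
      bracket (φA Z) (bracket X Y) = 0) ∧
  (∀ X (f : R) Y, bracket X (f • Y) = σ f • bracket X Y + anchor (φA X) f • φA Y) ∧
  (∀ X, anchor (φA X) = SDeriv.Ad σ (anchor X)) ∧
  (∀ X Y, anchor (bracket X Y) = SDeriv.sbrack σ (anchor X) (anchor Y))

/-- The Hom-Lie algebroid `(φ^!TM, φ, Ad_{φ^*}, [·,·]_{φ^*}, id)` (Example 2.7). -/
def pullbackAlgebroid (σ : R ≃+* R) : PreAlgebroid σ (SDeriv R σ) where
  φA := SDeriv.AdEquiv σ
  φA_smul f X := by ext a; simp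
  bracket := SDeriv.sbrack σ
  anchor := LinearMap.id


namespace PreAlgebroid

variable {σ : R ≃+* R} {A : Type} [AddCommGroup A] [Module R A]

theorem φA_symm_smul (P : PreAlgebroid σ A) (f : R) (X : A) :
    P.φA.symm (f • X) = σ.symm f • P.φA.symm X := by
  apply P.φA.injective
  rw [P.φA_smul]
  simp

/-- The map `φ_A^† : Γ(A^*) → Γ(A^*)`, `⟨φ_A^†(ξ), X⟩ = φ^*⟨ξ, φ_A^{-1}(X)⟩`. -/
def phiDag (P : PreAlgebroid σ A) (ξ : Module.Dual R A) : Module.Dual R A where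
  toFun X := σ (ξ (P.φA.symm X))
  map_add' X Y := by simp
  map_smul' f X := by simp [P.φA_symm_smul, smul_eq_mul]

@[simp] theorem phiDag_apply (P : PreAlgebroid σ A) (ξ : Module.Dual R A) (X : A) :
    P.phiDag ξ X = σ (ξ (P.φA.symm X)) := rfl

/-- The inverse `(φ_A^†)^{-1}` of `φ_A^†`. -/
def phiDagInv (P : PreAlgebroid σ A) (ξ : Module.Dual R A) : Module.Dual R A where
  toFun X := σ.symm (ξ (P.φA X))
  map_add' X Y := by simp
  map_smul' f X := by simp [P.φA_smul, smul_eq_mul]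

@[simp] theorem phiDagInv_apply (P : PreAlgebroid σ A) (ξ : Module.Dual R A) (X : A) :
    P.phiDagInv ξ X = σ.symm (ξ (P.φA X)) := rfl

/-- `φ_A^†` as an additive equivalence of `Γ(A^*)`. -/
def phiDagEquiv (P : PreAlgebroid σ A) : Module.Dual R A ≃+ Module.Dual R A where
  toFun := P.phiDag
  invFun := P.phiDagInv
  left_inv ξ := by ext X; simp
  right_inv ξ := by ext X; simp
  map_add' ξ η := by ext X; simp

@[simp] theorem phiDagEquiv_apply (P : PreAlgebroid σ A) (ξ : Module.Dual R A) :
    P.phiDagEquiv ξ = P.phiDag ξ := rfl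

theorem phiDag_smul (P : PreAlgebroid σ A) (f : R) (ξ : Module.Dual R A) :
    P.phiDag (f • ξ) = σ f • P.phiDag ξ := by
  ext X; simp

/-- The differential on functions: `⟨d_A f, X⟩ = a_A(X)(f)`. -/
def dZero (P : PreAlgebroid σ A) (f : R) : Module.Dual R A where
  toFun X := P.anchor X f
  map_add' X Y := by show P.anchor (X + Y) f = _; rw [map_add]; simp
  map_smul' c X := by show P.anchor (c • X) f = _; rw [map_smul]; simp [smul_eq_mul]

@[simp] theorem dZero_apply (P : PreAlgebroid σ A) (f : R) (X : A) :
    P.dZero f X = P.anchor X f := rfl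

/-- The Lie derivative of a cosection, characterised (via the Hom-Cartan formula) by
`⟨L_X^A α, Y⟩ = a_A(φ_A X)⟨α, φ_A^{-1} Y⟩ − ⟨φ_A^† α, [X, φ_A^{-1} Y]_A⟩`. -/
def lie (P : PreAlgebroid σ A) (hP : P.IsHomLie) (X : A) (ξ : Module.Dual R A) :
    Module.Dual R A where
  toFun Y := P.anchor (P.φA X) (ξ (P.φA.symm Y)) - P.phiDag ξ (P.bracket X (P.φA.symm Y))
  map_add' Y Z := by
    obtain ⟨hbl, hbr, hskew, hφbr, hjac, hlei, haφ, habr⟩ := hP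
    simp [hbr]
    ring
  map_smul' f Y := by
    obtain ⟨hbl, hbr, hskew, hφbr, hjac, hlei, haφ, habr⟩ := hP
    simp only [P.φA_symm_smul, map_smul, smul_eq_mul, RingHom.id_apply]
    rw [SDeriv.leibniz, hlei, map_add, map_smul, map_smul]
    simp only [phiDag_apply, smul_eq_mul, AddEquiv.symm_apply_apply,
      RingEquiv.apply_symm_apply]
    ring

@[simp] theorem lie_apply (P : PreAlgebroid σ A) (hP : P.IsHomLie) (X : A)
    (ξ : Module.Dual R A) (Y : A) :
    P.lie hP X ξ Y =
      P.anchor (P.φA X) (ξ (P.φA.symm Y)) - P.phiDag ξ (P.bracket X (P.φA.symm Y)) := rfl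

/-- The bracket `[ξ,η]_π := L_{♯ξ}^A η − L_{♯η}^A ξ − d_A⟨♯ξ, η⟩` induced by a map
`♯ : Γ(A^*) → Γ(A)` (e.g. `π^♯` for a 2-section `π`). -/
def piBr (P : PreAlgebroid σ A) (hP : P.IsHomLie) (sh : Module.Dual R A →ₗ[R] A)
    (ξ η : Module.Dual R A) : Module.Dual R A :=
  P.lie hP (sh ξ) η - P.lie hP (sh η) ξ - P.dZero (η (sh ξ))

/-- The degree-one part of the differential of a Hom-Lie algebroid, as a 2-form. -/
def dOne (P : PreAlgebroid σ A) (ξ : Module.Dual R A) : A → A → R := fun X Y =>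
  P.anchor X (ξ (P.φA.symm Y)) - P.anchor Y (ξ (P.φA.symm X)) -
    P.phiDag ξ (P.bracket (P.φA.symm X) (P.φA.symm Y))

/-- The action of `φ_A` on `(1,1)`-tensors (bundle maps `N : A → A`), given under the
identification `Γ(A^* ⊗ A) ≅ End(Γ(A))` by `φ_A(N) = φ_A ∘ N ∘ φ_A^{-1}`. -/
def phiEnd (P : PreAlgebroid σ A) (N : A →ₗ[R] A) : A →ₗ[R] A where
  toFun X := P.φA (N (P.φA.symm X))
  map_add' X Y := by simp
  map_smul' f X := by simp [P.φA_symm_smul, P.φA_smul]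

@[simp] theorem phiEnd_apply (P : PreAlgebroid σ A) (N : A →ₗ[R] A) (X : A) :
    P.phiEnd N X = P.φA (N (P.φA.symm X)) := rfl

/-- The action of `φ_A` on `(1,1)`-tensors on `A^*` (bundle maps `Γ(A^*) → Γ(A^*)`),
`φ_A(P') = φ_A^† ∘ P' ∘ (φ_A^†)^{-1}`. -/
def phiEndDual (P : PreAlgebroid σ A) (Q : Module.Dual R A → Module.Dual R A) :
    Module.Dual R A → Module.Dual R A := fun ξ => P.phiDag (Q (P.phiDagInv ξ))

/-- The Nijenhuis torsion of a bundle map `N : A → A`. -/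
def torsion (P : PreAlgebroid σ A) (N : A →ₗ[R] A) (X Y : A) : A :=
  P.bracket (N X) (N Y) - N (P.bracket (N X) Y) - N (P.bracket X (N Y)) +
    N (N (P.bracket X Y))

/-- The deformed bracket `[X,Y]_N := [NX,Y]_A + [X,NY]_A − N[X,Y]_A`. -/
def bracketN (P : PreAlgebroid σ A) (N : A →ₗ[R] A) (X Y : A) : A :=
  P.bracket (N X) Y + P.bracket X (N Y) - N (P.bracket X Y)

/-- The Lie derivative of a `(1,1)`-tensor `N`, as an operator:
`(L_X^A N)(Y) = L_X^A(N(φ_A^{-1} Y)) − φ_A(N)(L_X^A(φ_A^{-1} Y))`. -/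
def lieEndOp (P : PreAlgebroid σ A) (X : A) (N : A →ₗ[R] A) : A → A := fun Y =>
  P.bracket X (N (P.φA.symm Y)) - P.phiEnd N (P.bracket X (P.φA.symm Y))

end PreAlgebroid

/-- The dual `N^* : Γ(A^*) → Γ(A^*)` of a bundle map `N : A → A`. -/
def Ndual {A : Type} [AddCommGroup A] [Module R A] (N : A →ₗ[R] A)
    (ξ : Module.Dual R A) : Module.Dual R A := ξ ∘ₗ N

@[simp] theorem Ndual_apply {A : Type} [AddCommGroup A] [Module R A] (N : A →ₗ[R] A)
    (ξ : Module.Dual R A) (X : A) : Ndual N ξ X = ξ (N X) := rfl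

/-- Iterated composition `N^p` of a bundle map. -/
def Npow {A : Type} [AddCommGroup A] [Module R A] (N : A →ₗ[R] A) : ℕ → (A →ₗ[R] A)
  | 0 => LinearMap.id
  | p + 1 => N ∘ₗ Npow N p


/-- An axiomatisation of the algebra `Γ(Λ^• A)` of multisections of a Hom-Lie algebroid,
with its grading, wedge product, extension of `φ_A`, Hom-Schouten bracket, contractions
with cosections, and evaluation against tuples of cosections. -/
structure HomSchoutenCalc {σ : R ≃+* R} {A : Type} [AddCommGroup A] [Module R A]
    (P : PreAlgebroid σ A) (S : Type) [AddCommGroup S] [Module R S] where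
  G : ℕ → Submodule R S
  ofFun : R →ₗ[R] S
  ofSec : A →ₗ[R] S
  ofFun_mem : ∀ f : R, ofFun f ∈ G 0
  ofSec_mem : ∀ X : A, ofSec X ∈ G 1
  wedge : S → S → S
  wedge_add_left : ∀ D₁ D₂ E, wedge (D₁ + D₂) E = wedge D₁ E + wedge D₂ E
  wedge_add_right : ∀ D E₁ E₂, wedge D (E₁ + E₂) = wedge D E₁ + wedge D E₂
  wedge_smul_left : ∀ (f : R) D E, wedge (f • D) E = f • wedge D E
  wedge_smul_right : ∀ (f : R) D E, wedge D (f • E) = f • wedge D E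
  wedge_mem : ∀ {k l : ℕ} {D E : S}, D ∈ G k → E ∈ G l → wedge D E ∈ G (k + l)
  wedge_assoc : ∀ D E F, wedge (wedge D E) F = wedge D (wedge E F)
  wedge_fun_left : ∀ (f : R) D, wedge (ofFun f) D = f • D
  wedge_comm : ∀ {k l : ℕ} {D E : S}, D ∈ G k → E ∈ G l →
    wedge D E = ((-1 : ℤ) ^ (k * l)) • wedge E D
  span_decomp : ∀ n : ℕ, G n ≤ Submodule.span R
    {D | ∃ v : Fin n → A, D = (List.ofFn fun i => ofSec (v i)).foldr wedge (ofFun 1)}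
  phi : S → S
  phi_add : ∀ D E, phi (D + E) = phi D + phi E
  phi_smul : ∀ (f : R) D, phi (f • D) = σ f • phi D
  phi_ofFun : ∀ f, phi (ofFun f) = ofFun (σ f)
  phi_ofSec : ∀ X, phi (ofSec X) = ofSec (P.φA X)
  phi_wedge : ∀ D E, phi (wedge D E) = wedge (phi D) (phi E)
  phi_mem : ∀ {k : ℕ} {D : S}, D ∈ G k → phi D ∈ G k
  br : S → S → S
  br_add_left : ∀ D₁ D₂ E, br (D₁ + D₂) E = br D₁ E + br D₂ E
  br_add_right : ∀ D E₁ E₂, br D (E₁ + E₂) = br D E₁ + br D E₂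
  br_mem : ∀ {k l : ℕ} {D E : S}, D ∈ G k → E ∈ G l → br D E ∈ G (k + l - 1)
  br_ff : ∀ f g : R, br (ofFun f) (ofFun g) = 0
  br_Xf : ∀ (X : A) (f : R), br (ofSec X) (ofFun f) = ofFun (P.anchor (P.φA X) f)
  br_XY : ∀ X Y : A, br (ofSec X) (ofSec Y) = ofSec (P.bracket X Y)
  br_wedge : ∀ {k l : ℕ} {D₁ D₂ : S} (D₃ : S), D₁ ∈ G k → D₂ ∈ G l →
    br D₁ (wedge D₂ D₃) =
      wedge (br D₁ D₂) (phi D₃) + ((-1 : ℤ) ^ ((k + 1) * l)) • wedge (phi D₂) (br D₁ D₃)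
  br_skew : ∀ {k l : ℕ} {D₁ D₂ : S}, D₁ ∈ G k → D₂ ∈ G l →
    br D₁ D₂ = (-((-1 : ℤ) ^ ((k - 1) * (l - 1)))) • br D₂ D₁
  sharp : S → Module.Dual R A →ₗ[R] A
  sharp_add : ∀ D E, sharp (D + E) = sharp D + sharp E
  sharp_smul : ∀ (f : R) D, sharp (f • D) = f • sharp D
  sharp_wedge : ∀ (X Y : A) (α : Module.Dual R A),
    sharp (wedge (ofSec X) (ofSec Y)) α = α X • Y - α Y • X
  sharp_nondeg : ∀ D ∈ G 2, (∀ α, sharp D α = 0) → D = 0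
  sharp3 : S → Module.Dual R A → Module.Dual R A → A
  sharp3_add : ∀ D E α β, sharp3 (D + E) α β = sharp3 D α β + sharp3 E α β
  sharp3_wedge : ∀ (X Y Z : A) (α β : Module.Dual R A),
    sharp3 (wedge (ofSec X) (wedge (ofSec Y) (ofSec Z))) α β =
      (α X * β Y) • Z - (α X * β Z) • Y - (α Y * β X) • Z + (α Y * β Z) • X +
        (α Z * β X) • Y - (α Z * β Y) • X
  ev : ∀ {n : ℕ}, S → (Fin n → Module.Dual R A) → R
  ev_add : ∀ {n : ℕ} (D E : S) (ξ : Fin n → Module.Dual R A), ev (D + E) ξ = ev D ξ + ev E ξ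
  ev_fun : ∀ (f : R) (ξ : Fin 0 → Module.Dual R A), ev (ofFun f) ξ = f
  ev_sec : ∀ (X : A) (ξ : Fin 1 → Module.Dual R A), ev (ofSec X) ξ = ξ 0 X
  ev_two : ∀ {D : S}, D ∈ G 2 → ∀ ξ : Fin 2 → Module.Dual R A, ev D ξ = ξ 1 (sharp D (ξ 0))
  ev_three : ∀ {D : S}, D ∈ G 3 → ∀ ξ : Fin 3 → Module.Dual R A,
    ev D ξ = ξ 2 (sharp3 D (ξ 0) (ξ 1))
  ev_nondeg : ∀ {n : ℕ} (D : S), D ∈ G n → (∀ ξ : Fin n → Module.Dual R A, ev D ξ = 0) → D = 0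

/-- `(π, N)` is a Hom-Poisson-Nijenhuis structure on the Hom-Lie algebroid `P`:
`π` is a Hom-Poisson structure, `N` is a Hom-Nijenhuis structure, and they are compatible,
i.e. `N ∘ π^♯ = π^♯ ∘ N^*` and `C_π^N = 0`. -/
def IsHPN {σ : R ≃+* R} {A : Type} [AddCommGroup A] [Module R A] {P : PreAlgebroid σ A}
    (hP : P.IsHomLie) {S : Type} [AddCommGroup S] [Module R S] (C : HomSchoutenCalc P S)
    (π : S) (N : A →ₗ[R] A) : Prop :=
  π ∈ C.G 2 ∧ C.br π π = 0 ∧ C.phi π = π ∧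
  (∀ X Y : A, P.torsion N X Y = 0) ∧ P.phiEnd N = N ∧
  (∀ α : Module.Dual R A, N (C.sharp π α) = C.sharp π (Ndual N α)) ∧
  (∀ α β : Module.Dual R A,
    P.piBr hP (N ∘ₗ C.sharp π) α β -
      (P.piBr hP (C.sharp π) (Ndual N α) β + P.piBr hP (C.sharp π) α (Ndual N β) -
        Ndual N (P.piBr hP (C.sharp π) α β)) = 0)

/-- `L` is a Hom-Dirac structure in `E` with respect to the given pairing, Hom-Courant
bracket and map `φ_E`: it is (maximally) isotropic, integrable and `φ_E`-invariant. -/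
def IsDiracSet {E : Type} [AddCommGroup E] [Module R E] (pairE : E → E → R)
    (bbE : E → E → E) (φE : E → E) (L : Submodule R E) : Prop :=
  (∀ x ∈ L, ∀ y ∈ L, pairE x y = 0) ∧
  (∀ x : E, (∀ y ∈ L, pairE x y = 0) → x ∈ L) ∧
  (∀ x ∈ L, ∀ y ∈ L, bbE x y ∈ L) ∧
  (∀ x ∈ L, φE x ∈ L)

section Courant

variable [Invertible (2 : R)]

/-- A Hom-Courant algebroid (Definition 2.18 of the paper). -/
structure HomCourant (σ : R ≃+* R) (E : Type) [AddCommGroup E] [Module R E] where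
  φE : E ≃+ E
  φE_smul : ∀ (f : R) (e : E), φE (f • e) = σ f • φE e
  pair : E →ₗ[R] E →ₗ[R] R
  pair_symm : ∀ e₁ e₂, pair e₁ e₂ = pair e₂ e₁
  pair_nondeg : ∀ e : E, (∀ e', pair e e' = 0) → e = 0
  circ : E → E → E
  circ_add_left : ∀ e₁ e₂ e₃, circ (e₁ + e₂) e₃ = circ e₁ e₃ + circ e₂ e₃
  circ_add_right : ∀ e₁ e₂ e₃, circ e₁ (e₂ + e₃) = circ e₁ e₂ + circ e₁ e₃
  rho : E →ₗ[R] SDeriv R σ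
  Dop : R → E
  Dop_pair : ∀ (f : R) (e : E), pair (Dop f) e = (⅟(2 : R)) * rho e f
  phi_circ : ∀ e₁ e₂, φE (circ e₁ e₂) = circ (φE e₁) (φE e₂)
  homLeibniz : ∀ e₁ e₂ e₃,
    circ (φE e₁) (circ e₂ e₃) = circ (circ e₁ e₂) (φE e₃) + circ (φE e₂) (circ e₁ e₃)
  rho_phi : ∀ e, rho (φE e) = SDeriv.Ad σ (rho e)
  rho_circ : ∀ e₁ e₂, rho (circ e₁ e₂) = SDeriv.sbrack σ (rho e₁) (rho e₂)
  circ_self : ∀ e, circ e e = Dop (pair e e)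
  pair_phi : ∀ e₁ e₂, pair (φE e₁) (φE e₂) = σ (pair e₁ e₂)
  invariance : ∀ e e₁ e₂,
    rho (φE e) (pair e₁ e₂) = pair (circ e e₁) (φE e₂) + pair (φE e₁) (circ e e₂)

/-- The Hom-Courant bracket `[[e₁, e₂]] = ½ (e₁ ⊙ e₂ − e₂ ⊙ e₁)`. -/
def HomCourant.bb {σ : R ≃+* R} {E : Type} [AddCommGroup E] [Module R E]
    (HC : HomCourant σ E) (e₁ e₂ : E) : E :=
  (⅟(2 : R)) • (HC.circ e₁ e₂ - HC.circ e₂ e₁)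

end Courant

section Lemmas16

variable [Invertible (2 : R)] {σ : R ≃+* R} {E : Type} [AddCommGroup E] [Module R E]
  (HC : HomCourant σ E)

private lemma eq_of_pair {u v : E} (h : ∀ z, HC.pair u z = HC.pair v z) : u = v := by
  have h0 : ∀ z, HC.pair (u - v) z = 0 := fun z => by
    rw [map_sub, LinearMap.sub_apply, h, sub_self]
  exact sub_eq_zero.mp (HC.pair_nondeg _ h0)

private lemma eq_of_pair_phi {u v : E}
    (h : ∀ w, HC.pair u (HC.φE w) = HC.pair v (HC.φE w)) : u = v := by
  apply eq_of_pair HC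
  intro z
  have hz := h (HC.φE.symm z)
  rwa [HC.φE.apply_symm_apply] at hz

private lemma circ_zero_left (b : E) : HC.circ 0 b = 0 := by
  have h := HC.circ_add_left 0 0 b
  rw [add_zero] at h
  exact (left_eq_add.mp h)

private lemma circ_zero_right (a : E) : HC.circ a 0 = 0 := by
  have h := HC.circ_add_right a 0 0
  rw [add_zero] at h
  exact (left_eq_add.mp h)

private lemma circ_neg_left (a b : E) : HC.circ (-a) b = -HC.circ a b := by
  have h := HC.circ_add_left a (-a) b
  rw [add_neg_cancel, circ_zero_left HC] at h
  exact eq_neg_of_add_eq_zero_right h.symm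

private lemma circ_neg_right (a b : E) : HC.circ a (-b) = -HC.circ a b := by
  have h := HC.circ_add_right a b (-b)
  rw [add_neg_cancel, circ_zero_right HC] at h
  exact eq_neg_of_add_eq_zero_right h.symm

private lemma circ_sub_left (a a' b : E) :
    HC.circ (a - a') b = HC.circ a b - HC.circ a' b := by
  rw [sub_eq_add_neg, HC.circ_add_left, circ_neg_left HC, ← sub_eq_add_neg]

private lemma circ_sub_right (a b b' : E) :
    HC.circ a (b - b') = HC.circ a b - HC.circ a b' := by
  rw [sub_eq_add_neg, HC.circ_add_right, circ_neg_right HC, ← sub_eq_add_neg]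

private lemma circ_two_smul_right (a b : E) :
    HC.circ a ((2:R) • b) = (2:R) • HC.circ a b := by
  rw [two_smul, two_smul, HC.circ_add_right]

private lemma rho_one (e : E) : HC.rho e 1 = 0 := by
  have h := (HC.rho e).leibniz 1 1
  simp only [mul_one, map_one, one_mul] at h
  exact left_eq_add.mp h

private lemma rho_two (e : E) : HC.rho e 2 = 0 := by
  have h2 : (2:R) = 1 + 1 := by norm_num
  rw [h2, SDeriv.map_add, rho_one HC, add_zero]

private lemma sigma_two : σ (2 : R) = 2 := by
  have h2 : (2:R) = 1 + 1 := by norm_num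
  rw [h2, map_add, map_one]

private lemma sigma_invOf_two : σ (⅟(2 : R)) = ⅟(2 : R) := by
  have h0 : σ (⅟(2:R)) * σ (2:R) = 1 := by
    rw [← map_mul, invOf_mul_self, map_one]
  rw [sigma_two] at h0
  exact (invOf_eq_right_inv (by rwa [mul_comm] at h0)).symm

private lemma rho_invOf_two (e : E) : HC.rho e (⅟(2 : R)) = 0 := by
  have h := (HC.rho e).leibniz 2 (⅟(2:R))
  rw [mul_invOf_self, rho_one HC, rho_two HC, sigma_two, zero_mul, zero_add] at h
  have h2 : HC.rho e (⅟(2:R)) = ⅟(2:R) * (2 * HC.rho e (⅟(2:R))) := by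
    rw [← mul_assoc, invOf_mul_self, one_mul]
  rw [h2, ← h, mul_zero]

private lemma Dop_add (f g : R) : HC.Dop (f + g) = HC.Dop f + HC.Dop g := by
  apply eq_of_pair HC
  intro z
  rw [map_add, LinearMap.add_apply, HC.Dop_pair, HC.Dop_pair, HC.Dop_pair, SDeriv.map_add]
  ring

private lemma Dop_const_mul (c : R) (hc : ∀ e : E, HC.rho e c = 0) (hσ : σ c = c) (f : R) :
    HC.Dop (c * f) = c • HC.Dop f := by
  apply eq_of_pair HC
  intro z
  rw [map_smul, LinearMap.smul_apply, smul_eq_mul, HC.Dop_pair, HC.Dop_pair,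
    (HC.rho z).leibniz, hc, hσ]
  ring

private lemma Dop_two_mul (f : R) : HC.Dop (2 * f) = (2:R) • HC.Dop f :=
  Dop_const_mul HC 2 (rho_two HC) sigma_two f

private lemma Dop_half (f : R) : HC.Dop (⅟(2:R) * f) = (⅟(2:R)) • HC.Dop f :=
  Dop_const_mul HC _ (rho_invOf_two HC) sigma_invOf_two f

private lemma rho_symm_apply (z : E) (a : R) :
    HC.rho (HC.φE.symm z) a = σ.symm (HC.rho z (σ a)) := by
  have h := DFunLike.congr_fun (HC.rho_phi (HC.φE.symm z)) (σ a)
  rw [HC.φE.apply_symm_apply, SDeriv.Ad_apply, RingEquiv.symm_apply_apply] at h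
  rw [h, RingEquiv.symm_apply_apply]

private lemma phi_Dop (f : R) : HC.φE (HC.Dop f) = HC.Dop (σ f) := by
  apply eq_of_pair HC
  intro z
  have hz : z = HC.φE (HC.φE.symm z) := (HC.φE.apply_symm_apply z).symm
  rw [HC.Dop_pair]
  conv_lhs => rw [hz]
  rw [HC.pair_phi, HC.Dop_pair, rho_symm_apply HC, map_mul, sigma_invOf_two,
    RingEquiv.apply_symm_apply]

private lemma circ_Dop (e : E) (f : R) : HC.circ e (HC.Dop f) = HC.Dop (HC.rho e f) := by
  apply eq_of_pair_phi HC
  intro w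
  have hinv := HC.invariance e (HC.Dop f) w
  rw [HC.Dop_pair, phi_Dop HC, HC.Dop_pair, (HC.rho (HC.φE e)).leibniz,
    rho_invOf_two HC, sigma_invOf_two, zero_mul, zero_add, HC.rho_circ,
    SDeriv.sbrack_apply, RingEquiv.symm_apply_apply, HC.rho_phi, SDeriv.Ad_apply] at hinv
  rw [HC.Dop_pair, HC.rho_phi, SDeriv.Ad_apply]
  linear_combination -hinv

private lemma circ_symm (a b : E) :
    HC.circ a b + HC.circ b a = (2:R) • HC.Dop (HC.pair a b) := by
  have h := HC.circ_self (a + b)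
  rw [HC.circ_add_left, HC.circ_add_right, HC.circ_add_right, HC.circ_self,
    HC.circ_self] at h
  have hp : HC.pair (a + b) (a + b) =
      HC.pair a a + (2 * HC.pair a b + HC.pair b b) := by
    simp only [map_add, LinearMap.add_apply]
    rw [HC.pair_symm b a]
    ring
  rw [hp, Dop_add HC, Dop_add HC, Dop_two_mul HC] at h
  linear_combination (norm := module) h

private lemma Dop_circ (f : R) (e : E) : HC.circ (HC.Dop f) e = 0 := by
  have h := circ_symm HC (HC.Dop f) e
  rw [HC.Dop_pair, circ_Dop HC, Dop_half HC, smul_smul, mul_invOf_self, one_smul] at h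
  exact add_eq_right.mp h

private lemma bb_eq (u v : E) : HC.bb u v = HC.circ u v - HC.Dop (HC.pair u v) := by
  have h : HC.circ u v - HC.circ v u = (2:R) • (HC.circ u v - HC.Dop (HC.pair u v)) := by
    have hs := circ_symm HC v u
    rw [HC.pair_symm v u] at hs
    linear_combination (norm := module) -hs
  rw [HomCourant.bb, h, smul_smul, invOf_mul_self, one_smul]

private lemma two_smul_bb (u v : E) :
    (2:R) • HC.bb u v = HC.circ u v - HC.circ v u := by
  rw [HomCourant.bb, smul_smul, mul_invOf_self, one_smul]

section Three

variable [Invertible (3 : R)]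

private lemma rho_three (e : E) : HC.rho e 3 = 0 := by
  have h3 : (3:R) = 1 + 1 + 1 := by norm_num
  rw [h3, SDeriv.map_add, SDeriv.map_add, rho_one HC, add_zero, add_zero]

private lemma sigma_three : σ (3 : R) = 3 := by
  have h3 : (3:R) = 1 + 1 + 1 := by norm_num
  rw [h3, map_add, map_add, map_one]

private lemma sigma_invOf_three : σ (⅟(3 : R)) = ⅟(3 : R) := by
  have h0 : σ (⅟(3:R)) * σ (3:R) = 1 := by
    rw [← map_mul, invOf_mul_self, map_one]
  rw [sigma_three] at h0
  exact (invOf_eq_right_inv (by rwa [mul_comm] at h0)).symm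

private lemma rho_invOf_three (e : E) : HC.rho e (⅟(3 : R)) = 0 := by
  have h := (HC.rho e).leibniz 3 (⅟(3:R))
  rw [mul_invOf_self, rho_one HC, rho_three HC, sigma_three, zero_mul, zero_add] at h
  have h2 : HC.rho e (⅟(3:R)) = ⅟(3:R) * (3 * HC.rho e (⅟(3:R))) := by
    rw [← mul_assoc, invOf_mul_self, one_mul]
  rw [h2, ← h, mul_zero]

private lemma Dop_third (f : R) : HC.Dop (⅟(3:R) * f) = (⅟(3:R)) • HC.Dop f :=
  Dop_const_mul HC _ (rho_invOf_three HC) sigma_invOf_three f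

end Three

end Lemmas16


/-- Let `(E, φ, φ_E, ⟨⟨·,·⟩⟩, ⊙_E, ρ_E)` be a Hom-Courant algebroid and
`[[·,·]]_E` the associated Hom-Courant bracket.  Then for all `e₁, e₂, e₃ ∈ Γ(E)`,
`Σ_{cycl} [[ [[e₁,e₂]]_E, φ_E(e₃) ]]_E = 𝒟 T(e₁,e₂,e₃)` where
`T(e₁,e₂,e₃) = (1/3) Σ_{cycl} ⟨⟨[[e₁,e₂]]_E, φ_E(e₃)⟩⟩`. -/
theorem hom_courant_jacobiator
    {R : Type} [CommRing R] [Invertible (2 : R)] [Invertible (3 : R)] {σ : R ≃+* R}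
    {E : Type} [AddCommGroup E] [Module R E] (HC : HomCourant σ E) :
    ∀ e₁ e₂ e₃ : E,
      HC.bb (HC.bb e₁ e₂) (HC.φE e₃) + HC.bb (HC.bb e₂ e₃) (HC.φE e₁) +
          HC.bb (HC.bb e₃ e₁) (HC.φE e₂) =
        HC.Dop ((⅟(3 : R)) * (HC.pair (HC.bb e₁ e₂) (HC.φE e₃) +
          HC.pair (HC.bb e₂ e₃) (HC.φE e₁) + HC.pair (HC.bb e₃ e₁) (HC.φE e₂))) := by
  intro e₁ e₂ e₃
  have hb12 := bb_eq HC e₁ e₂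
  have hb23 := bb_eq HC e₂ e₃
  have hb31 := bb_eq HC e₃ e₁
  -- the `Y` identities : circ of a bracket equals circ of a circ
  have hY3 : HC.circ (HC.bb e₁ e₂) (HC.φE e₃) = HC.circ (HC.circ e₁ e₂) (HC.φE e₃) := by
    rw [hb12, circ_sub_left HC, Dop_circ HC, sub_zero]
  have hY1 : HC.circ (HC.bb e₂ e₃) (HC.φE e₁) = HC.circ (HC.circ e₂ e₃) (HC.φE e₁) := by
    rw [hb23, circ_sub_left HC, Dop_circ HC, sub_zero]
  have hY2 : HC.circ (HC.bb e₃ e₁) (HC.φE e₂) = HC.circ (HC.circ e₃ e₁) (HC.φE e₂) := by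
    rw [hb31, circ_sub_left HC, Dop_circ HC, sub_zero]
  -- the `X` identities
  have hX3 : HC.circ (HC.φE e₃) (HC.bb e₁ e₂) =
      HC.circ (HC.φE e₃) (HC.circ e₁ e₂) -
        HC.Dop (HC.rho (HC.φE e₃) (HC.pair e₁ e₂)) := by
    rw [hb12, circ_sub_right HC, circ_Dop HC]
  have hX1 : HC.circ (HC.φE e₁) (HC.bb e₂ e₃) =
      HC.circ (HC.φE e₁) (HC.circ e₂ e₃) -
        HC.Dop (HC.rho (HC.φE e₁) (HC.pair e₂ e₃)) := by
    rw [hb23, circ_sub_right HC, circ_Dop HC]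
  have hX2 : HC.circ (HC.φE e₂) (HC.bb e₃ e₁) =
      HC.circ (HC.φE e₂) (HC.circ e₃ e₁) -
        HC.Dop (HC.rho (HC.φE e₂) (HC.pair e₃ e₁)) := by
    rw [hb31, circ_sub_right HC, circ_Dop HC]
  -- first expression of the double brackets
  have hT3 : HC.bb (HC.bb e₁ e₂) (HC.φE e₃) =
      HC.circ (HC.circ e₁ e₂) (HC.φE e₃) -
        HC.Dop (HC.pair (HC.bb e₁ e₂) (HC.φE e₃)) := by
    rw [bb_eq HC, hY3]
  have hT1 : HC.bb (HC.bb e₂ e₃) (HC.φE e₁) =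
      HC.circ (HC.circ e₂ e₃) (HC.φE e₁) -
        HC.Dop (HC.pair (HC.bb e₂ e₃) (HC.φE e₁)) := by
    rw [bb_eq HC, hY1]
  have hT2 : HC.bb (HC.bb e₃ e₁) (HC.φE e₂) =
      HC.circ (HC.circ e₃ e₁) (HC.φE e₂) -
        HC.Dop (HC.pair (HC.bb e₃ e₁) (HC.φE e₂)) := by
    rw [bb_eq HC, hY2]
  -- second expression of the double brackets
  have h2T3 : (2:R) • HC.bb (HC.bb e₁ e₂) (HC.φE e₃) =
      HC.circ (HC.circ e₁ e₂) (HC.φE e₃) -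
        (HC.circ (HC.φE e₃) (HC.circ e₁ e₂) -
          HC.Dop (HC.rho (HC.φE e₃) (HC.pair e₁ e₂))) := by
    rw [two_smul_bb HC, hY3, hX3]
  have h2T1 : (2:R) • HC.bb (HC.bb e₂ e₃) (HC.φE e₁) =
      HC.circ (HC.circ e₂ e₃) (HC.φE e₁) -
        (HC.circ (HC.φE e₁) (HC.circ e₂ e₃) -
          HC.Dop (HC.rho (HC.φE e₁) (HC.pair e₂ e₃))) := by
    rw [two_smul_bb HC, hY1, hX1]
  have h2T2 : (2:R) • HC.bb (HC.bb e₃ e₁) (HC.φE e₂) =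
      HC.circ (HC.circ e₃ e₁) (HC.φE e₂) -
        (HC.circ (HC.φE e₂) (HC.circ e₃ e₁) -
          HC.Dop (HC.rho (HC.φE e₂) (HC.pair e₃ e₁))) := by
    rw [two_smul_bb HC, hY2, hX2]
  -- symmetrisation identities
  have hs13 : HC.circ e₁ e₃ = (2:R) • HC.Dop (HC.pair e₃ e₁) - HC.circ e₃ e₁ := by
    have hs := circ_symm HC e₃ e₁
    linear_combination (norm := module) hs
  have hs21 : HC.circ e₂ e₁ = (2:R) • HC.Dop (HC.pair e₁ e₂) - HC.circ e₁ e₂ := by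
    have hs := circ_symm HC e₁ e₂
    linear_combination (norm := module) hs
  have hs32 : HC.circ e₃ e₂ = (2:R) • HC.Dop (HC.pair e₂ e₃) - HC.circ e₂ e₃ := by
    have hs := circ_symm HC e₂ e₃
    linear_combination (norm := module) hs
  -- the three hom-Leibniz identities, rewritten
  have hL1 : HC.circ (HC.φE e₁) (HC.circ e₂ e₃) =
      HC.circ (HC.circ e₁ e₂) (HC.φE e₃) +
        ((2:R) • HC.Dop (HC.rho (HC.φE e₂) (HC.pair e₃ e₁)) -
          HC.circ (HC.φE e₂) (HC.circ e₃ e₁)) := by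
    have h := HC.homLeibniz e₁ e₂ e₃
    rw [hs13, circ_sub_right HC, circ_two_smul_right HC, circ_Dop HC] at h
    exact h
  have hL2 : HC.circ (HC.φE e₂) (HC.circ e₃ e₁) =
      HC.circ (HC.circ e₂ e₃) (HC.φE e₁) +
        ((2:R) • HC.Dop (HC.rho (HC.φE e₃) (HC.pair e₁ e₂)) -
          HC.circ (HC.φE e₃) (HC.circ e₁ e₂)) := by
    have h := HC.homLeibniz e₂ e₃ e₁
    rw [hs21, circ_sub_right HC, circ_two_smul_right HC, circ_Dop HC] at h
    exact h
  have hL3 : HC.circ (HC.φE e₃) (HC.circ e₁ e₂) =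
      HC.circ (HC.circ e₃ e₁) (HC.φE e₂) +
        ((2:R) • HC.Dop (HC.rho (HC.φE e₁) (HC.pair e₂ e₃)) -
          HC.circ (HC.φE e₁) (HC.circ e₂ e₃)) := by
    have h := HC.homLeibniz e₃ e₁ e₂
    rw [hs32, circ_sub_right HC, circ_two_smul_right HC, circ_Dop HC] at h
    exact h
  -- the key linear identity
  have hkey : HC.Dop (HC.pair (HC.bb e₁ e₂) (HC.φE e₃)) +
      HC.Dop (HC.pair (HC.bb e₂ e₃) (HC.φE e₁)) +
      HC.Dop (HC.pair (HC.bb e₃ e₁) (HC.φE e₂)) =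
      (3:R) • (HC.bb (HC.bb e₁ e₂) (HC.φE e₃) + HC.bb (HC.bb e₂ e₃) (HC.φE e₁) +
        HC.bb (HC.bb e₃ e₁) (HC.φE e₂)) := by
    linear_combination (norm := module) hT3 + hT1 + hT2 - h2T3 - h2T3 - h2T1 - h2T1 -
      h2T2 - h2T2 + hL1 + hL2 + hL3
  rw [Dop_third HC, Dop_add HC, Dop_add HC, hkey, smul_smul, invOf_mul_self, one_smul]

end HomPaper
end

section
/- Let (E, φ, φ_E, ⟨⟨·,·⟩⟩, ⊙_E, ρ_E) be a Hom-Courant algebroid over M, [[·,·]]_E the Hom-Courant bracket, and L a Hom-Dirac structure on E. Then (L, φ, φ_E|_L, [[·,·]]_E|_L, ρ_E|_L) is a Hom-Lie algebroid over M. -/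
set_option maxHeartbeats 1000000

namespace HomPaper

variable {R : Type} [CommRing R]

/-- Let `(E, φ, φ_E, ⟨⟨·,·⟩⟩, ⊙_E, ρ_E)` be a Hom-Courant algebroid and
`L` a Hom-Dirac structure on `E` (a maximally isotropic, integrable, `φ_E`-invariant
subbundle).  Then `(L, φ, φ_E|_L, [[·,·]]_E|_L, ρ_E|_L)` is a Hom-Lie algebroid. -/
theorem hom_dirac_is_hom_lie_algebroid
    {R : Type} [CommRing R] [Invertible (2 : R)] {σ : R ≃+* R}
    {E : Type} [AddCommGroup E] [Module R E] (HC : HomCourant σ E)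
    (L : Submodule R E)
    (h : IsDiracSet (fun x y => HC.pair x y) HC.bb (⇑HC.φE) L) :
    IsHomLieAlgebroidRaw σ
      (fun x : ↥L => (⟨HC.φE x.1, h.2.2.2 x.1 x.2⟩ : ↥L))
      (fun x y : ↥L => (⟨HC.bb x.1 y.1, h.2.2.1 x.1 x.2 y.1 y.2⟩ : ↥L))
      (fun x : ↥L => HC.rho x.1) := by
  obtain ⟨hiso, hmax, hint, hφL⟩ := h
  -- `Dop 0 = 0`
  have hD0 : HC.Dop 0 = 0 := by
    apply HC.pair_nondeg
    intro e'
    rw [HC.Dop_pair]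
    simp
  -- `φE e 0 = 0` and `circ e (-a) = - circ e a`
  have hcz : ∀ e : E, HC.circ e (0 : E) = 0 := by
    intro e
    have h0 := HC.circ_add_right e 0 0
    rw [add_zero] at h0
    nth_rewrite 1 [← add_zero (HC.circ e 0)] at h0
    exact (add_left_cancel h0).symm
  have hcneg : ∀ e a : E, HC.circ e (-a) = - HC.circ e a := by
    intro e a
    have h0 := HC.circ_add_right e a (-a)
    rw [add_neg_cancel, hcz] at h0
    exact eq_neg_of_add_eq_zero_right h0.symm
  -- skew symmetry of `circ` on `L`
  have hskew : ∀ x ∈ L, ∀ y ∈ L, HC.circ x y = - HC.circ y x := by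
    intro x hx y hy
    have h1 := HC.circ_self (x + y)
    rw [HC.circ_add_left, HC.circ_add_right, HC.circ_add_right,
      HC.circ_self x, HC.circ_self y] at h1
    have hxx := hiso x hx x hx
    have hxy := hiso x hx y hy
    have hyx := hiso y hy x hx
    have hyy := hiso y hy y hy
    simp only at hxx hxy hyx hyy
    have hp : HC.pair (x + y) (x + y) = 0 := by
      simp [map_add, hxx, hxy, hyx, hyy]
    rw [hp, hxx, hyy, hD0] at h1
    rw [zero_add, add_zero] at h1
    exact eq_neg_of_add_eq_zero_left h1
  -- on `L`, the Courant bracket coincides with `circ`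
  have bb_eq : ∀ x ∈ L, ∀ y ∈ L, HC.bb x y = HC.circ x y := by
    intro x hx y hy
    unfold HomCourant.bb
    rw [hskew y hy x hx, sub_neg_eq_add, ← two_smul R, smul_smul, invOf_mul_self, one_smul]
  have hcmem : ∀ x ∈ L, ∀ y ∈ L, HC.circ x y ∈ L := by
    intro x hx y hy
    rw [← bb_eq x hx y hy]
    exact hint x hx y hy
  -- the Leibniz rule for `circ`
  have hleib : ∀ (e : E) (f : R) (y : E),
      HC.circ e (f • y) = σ f • HC.circ e y + (HC.rho (HC.φE e)) f • HC.φE y := by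
    intro e f y
    have key : ∀ e', HC.pair (HC.circ e (f • y)) (HC.φE e') =
        HC.pair (σ f • HC.circ e y + (HC.rho (HC.φE e)) f • HC.φE y) (HC.φE e') := by
      intro e'
      have hinv1 := HC.invariance e (f • y) e'
      have hinv2 := HC.invariance e y e'
      have lz := (HC.rho (HC.φE e)).leibniz f (HC.pair y e')
      have hpp := HC.pair_phi y e'
      rw [HC.φE_smul] at hinv1
      simp only [map_smul, LinearMap.smul_apply, smul_eq_mul] at hinv1
      simp only [map_add, map_smul, LinearMap.add_apply, LinearMap.smul_apply, smul_eq_mul]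
      linear_combination -hinv1 + lz + σ f * hinv2 - (HC.rho (HC.φE e)) f * hpp
    have hz : HC.circ e (f • y) -
        (σ f • HC.circ e y + (HC.rho (HC.φE e)) f • HC.φE y) = 0 := by
      apply HC.pair_nondeg
      intro e''
      have hk := key (HC.φE.symm e'')
      rw [HC.φE.apply_symm_apply] at hk
      simp only [map_sub, LinearMap.sub_apply]
      rw [hk, sub_self]
    exact sub_eq_zero.mp hz
  -- `φE.symm` preserves `L`
  have hsymm : ∀ x ∈ L, HC.φE.symm x ∈ L := by
    intro x hx
    apply hmax
    intro z hz
    have hp := HC.pair_phi (HC.φE.symm x) z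
    rw [HC.φE.apply_symm_apply] at hp
    have h0 : HC.pair x (HC.φE z) = 0 := hiso x hx _ (hφL z hz)
    simp only
    apply σ.injective
    rw [← hp, h0, map_zero]
  refine ⟨?_, ?_, ?_, ?_, ?_, ?_, ?_, ?_, ?_, ?_, ?_, ?_, ?_⟩
  · -- bijectivity of φE restricted to L
    constructor
    · intro a b hab
      exact Subtype.ext (HC.φE.injective (congrArg Subtype.val hab))
    · intro y
      refine ⟨⟨HC.φE.symm y.1, hsymm y.1 y.2⟩, ?_⟩
      exact Subtype.ext (HC.φE.apply_symm_apply y.1)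
  · intro X Y
    exact Subtype.ext (by simp [map_add])
  · intro f X
    exact Subtype.ext (by simpa using HC.φE_smul f X.1)
  · intro X Y
    simp [map_add]
  · intro f X
    simp [map_smul]
  · intro X Y Z
    refine Subtype.ext ?_
    simp only [Submodule.coe_add]
    unfold HomCourant.bb
    rw [HC.circ_add_left, HC.circ_add_right]
    rw [← smul_add]
    congr 1
    abel
  · intro X Y Z
    refine Subtype.ext ?_
    simp only [Submodule.coe_add]
    unfold HomCourant.bb
    rw [HC.circ_add_right, HC.circ_add_left]
    rw [← smul_add]
    congr 1
    abel
  · intro X Y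
    refine Subtype.ext ?_
    simp only [Submodule.coe_neg]
    unfold HomCourant.bb
    rw [← smul_neg]
    congr 1
    abel
  · intro X Y
    refine Subtype.ext ?_
    simp only
    rw [bb_eq X.1 X.2 Y.1 Y.2, bb_eq _ (hφL X.1 X.2) _ (hφL Y.1 Y.2), HC.phi_circ]
  · intro X Y Z
    refine Subtype.ext ?_
    simp only [Submodule.coe_add, Submodule.coe_zero]
    rw [bb_eq Y.1 Y.2 Z.1 Z.2, bb_eq Z.1 Z.2 X.1 X.2, bb_eq X.1 X.2 Y.1 Y.2]
    rw [bb_eq _ (hφL X.1 X.2) _ (hcmem Y.1 Y.2 Z.1 Z.2),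
        bb_eq _ (hφL Y.1 Y.2) _ (hcmem Z.1 Z.2 X.1 X.2),
        bb_eq _ (hφL Z.1 Z.2) _ (hcmem X.1 X.2 Y.1 Y.2)]
    have e1 := HC.homLeibniz X.1 Y.1 Z.1
    rw [hskew _ (hcmem X.1 X.2 Y.1 Y.2) _ (hφL Z.1 Z.2)] at e1
    rw [hskew X.1 X.2 Z.1 Z.2, hcneg] at e1
    rw [e1]
    abel
  · intro X f Y
    refine Subtype.ext ?_
    simp only [Submodule.coe_add, Submodule.coe_smul, SetLike.val_smul]
    rw [bb_eq X.1 X.2 _ (L.smul_mem f Y.2), bb_eq X.1 X.2 Y.1 Y.2]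
    exact hleib X.1 f Y.1
  · intro X
    exact HC.rho_phi X.1
  · intro X Y
    show HC.rho (HC.bb X.1 Y.1) = SDeriv.sbrack σ (HC.rho X.1) (HC.rho Y.1)
    rw [bb_eq X.1 X.2 Y.1 Y.2]
    exact HC.rho_circ X.1 Y.1

end HomPaper
end
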